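/- arXiv:1407.4679 — 4 statements merged into one kernel-verified Lean document; each statement's English description precedes it below -/
import Mathlib

section
/- Let α > 0 and let (a_n) be a sequence of positive reals such that (1/n^α) ∑_{k=1}^n a_k converges to L. Then for every continuous function f on [0,1], (1/n^α) ∑_{k=1}^n f(k/n) a_k converges to L ∫_0^1 α x^(α-1) f(x) dx. -/
/-!
Since `∑_{k ≤ n} a k ~ L n^α`, the mass `n^{-α} ∑ a k` carried by the points `k / n` in a cell
`(s, t]` tends to `L (t^α - s^α) = L ∫_s^t α x^(α-1) dx`. Fix a partition of `[0, 1]` on whose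
cells `f` oscillates by at most `ε`. Replacing `f` by its value at the right endpoint of each cell
moves both the discrete sum and the integral by `O(ε)`, and for this step function convergence
holds cell by cell.
-/

open Filter Finset Topology intervalIntegral

theorem tendsto_of_forall_approx {ι X : Type*} [PseudoMetricSpace X] {F : Filter ι}
    {u : ι → X} {l : X} (K : ℝ)
    (h : ∀ ε > 0, ∃ (v : ι → X) (l' : X), Tendsto v F (𝓝 l') ∧ dist l' l ≤ K * ε ∧
      ∀ᶠ i in F, dist (u i) (v i) ≤ K * ε) :
    Tendsto u F (𝓝 l) := by
  refine Metric.tendsto_nhds.2 fun δ hδ => ?_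
  set ε := δ / (3 * (|K| + 1))
  obtain ⟨v, l', hv, hl', huv⟩ := h ε (by positivity)
  have hKε : K * ε < δ / 3 :=
    calc K * ε ≤ |K| * ε := by gcongr; exact le_abs_self K
      _ < δ / 3 := by
        rw [mul_div_assoc', div_lt_div_iff₀ (by positivity) (by positivity)]
        nlinarith
  filter_upwards [huv, Metric.tendsto_nhds.1 hv (δ / 3) (by positivity)] with i hi hvi
  calc dist (u i) l ≤ dist (u i) (v i) + dist (v i) l' + dist l' l := dist_triangle4 _ _ _ _
    _ < δ := by linarith

theorem sum_Icc_eq_sum_range_sum_Ioc {M : Type*} [AddCommMonoid M] (g : ℕ → M) {N : ℕ → ℕ}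
    (hN : Monotone N) (h0 : N 0 = 0) (m : ℕ) :
    ∑ k ∈ Icc 1 (N m), g k = ∑ j ∈ range m, ∑ k ∈ Ioc (N j) (N (j + 1)), g k := by
  induction m with
  | zero => simp [h0]
  | succ m ih =>
    rw [sum_range_succ, ← ih]
    have h := sum_Ioc_consecutive g (hN m.zero_le) (hN m.le_succ)
    rw [h0] at h
    exact h.symm

theorem sum_Icc_sub_sum_Icc {M : Type*} [AddCommGroup M] (g : ℕ → M) {p q : ℕ} (hpq : p ≤ q) :
    ∑ k ∈ Icc 1 q, g k - ∑ k ∈ Icc 1 p, g k = ∑ k ∈ Ioc p q, g k :=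
  sub_eq_of_eq_add' (sum_Ioc_consecutive g p.zero_le hpq).symm

section PartialSums

variable {α L : ℝ} {a : ℕ → ℝ}

theorem tendsto_sum_Icc_floor_mul_div_rpow (hα : 0 < α)
    (hL : Tendsto (fun n : ℕ => (1 / (n : ℝ) ^ α) * ∑ k ∈ Icc 1 n, a k) atTop (𝓝 L))
    {t : ℝ} (ht : 0 ≤ t) :
    Tendsto (fun n : ℕ => (1 / (n : ℝ) ^ α) * ∑ k ∈ Icc 1 ⌊t * n⌋₊, a k) atTop
      (𝓝 (L * t ^ α)) := by
  rcases ht.eq_or_lt with rfl | ht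
  · simp [Real.zero_rpow hα.ne']
  have hN : Tendsto (fun n : ℕ => ⌊t * n⌋₊) atTop atTop :=
    tendsto_nat_floor_atTop.comp (tendsto_natCast_atTop_atTop.const_mul_atTop ht)
  have hratio : Tendsto (fun n : ℕ => (⌊t * n⌋₊ : ℝ) / n) atTop (𝓝 t) :=
    (tendsto_nat_floor_mul_div_atTop ht.le).comp tendsto_natCast_atTop_atTop
  refine ((hL.comp hN).mul (hratio.rpow_const (Or.inr hα.le))).congr' ?_
  filter_upwards [hN.eventually_gt_atTop 0, eventually_gt_atTop 0] with n hNn hn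
  have hNr : (0 : ℝ) < ⌊t * n⌋₊ := by exact_mod_cast hNn
  have hnr : (0 : ℝ) < n := by exact_mod_cast hn
  rw [Function.comp_apply, Real.div_rpow hNr.le hnr.le]
  field_simp

theorem tendsto_sum_Ioc_floor_mul_div_rpow (hα : 0 < α)
    (hL : Tendsto (fun n : ℕ => (1 / (n : ℝ) ^ α) * ∑ k ∈ Icc 1 n, a k) atTop (𝓝 L))
    {s t : ℝ} (hs : 0 ≤ s) (hst : s ≤ t) :
    Tendsto (fun n : ℕ => (1 / (n : ℝ) ^ α) * ∑ k ∈ Ioc ⌊s * n⌋₊ ⌊t * n⌋₊, a k) atTop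
      (𝓝 (L * (t ^ α - s ^ α))) := by
  rw [mul_sub]
  refine ((tendsto_sum_Icc_floor_mul_div_rpow hα hL (hs.trans hst)).sub
    (tendsto_sum_Icc_floor_mul_div_rpow hα hL hs)).congr fun n => ?_
  rw [← mul_sub, sum_Icc_sub_sum_Icc a (Nat.floor_mono (by gcongr))]

end PartialSums

structure IsFinePartition (f : ℝ → ℝ) (ε : ℝ) (m : ℕ) (c : ℕ → ℝ) : Prop where
  mono : Monotone c
  zero : c 0 = 0
  last : c m = 1
  osc : ∀ j < m, ∀ x ∈ Set.Icc (c j) (c (j + 1)), |f x - f (c (j + 1))| ≤ ε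

namespace IsFinePartition

variable {f : ℝ → ℝ} {ε : ℝ} {m : ℕ} {c : ℕ → ℝ}

theorem nonneg (hc : IsFinePartition f ε m c) (j : ℕ) : 0 ≤ c j :=
  hc.zero ▸ hc.mono j.zero_le

theorem le_one (hc : IsFinePartition f ε m c) {j : ℕ} (hj : j ≤ m) : c j ≤ 1 :=
  hc.last ▸ hc.mono hj

theorem Icc_subset (hc : IsFinePartition f ε m c) {j : ℕ} (hj : j < m) :
    Set.Icc (c j) (c (j + 1)) ⊆ Set.Icc 0 1 :=
  Set.Icc_subset_Icc (hc.nonneg j) (hc.le_one hj)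

end IsFinePartition

theorem ContinuousOn.exists_isFinePartition {f : ℝ → ℝ} (hf : ContinuousOn f (Set.Icc 0 1))
    {ε : ℝ} (hε : 0 < ε) : ∃ m c, IsFinePartition f ε m c := by
  obtain ⟨δ, hδ, hfδ⟩ := Metric.uniformContinuousOn_iff_le.1
    (isCompact_Icc.uniformContinuousOn_of_continuous hf) ε hε
  obtain ⟨m, hm⟩ := exists_nat_one_div_lt hδ
  have hm' : (0 : ℝ) < m + 1 := by positivity
  refine ⟨m + 1, fun j => j / (m + 1), fun i j hij => by gcongr, by simp,
    by simp [hm'.ne'], fun j hj x hx => ?_⟩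
  have hj' : (j : ℝ) + 1 ≤ m + 1 := by exact_mod_cast hj
  have hcj : (j + 1 : ℕ) / ((m : ℝ) + 1) ≤ 1 := by
    rw [div_le_one hm']; push_cast; exact hj'
  have hx1 : x ≤ 1 := hx.2.trans hcj
  have hx0 : 0 ≤ x := le_trans (by positivity) hx.1
  have hdist : dist x ((j + 1 : ℕ) / ((m : ℝ) + 1)) ≤ δ := by
    rw [Real.dist_eq, abs_sub_comm, abs_of_nonneg (sub_nonneg.2 hx.2)]
    have h := hx.1
    push_cast at h ⊢
    calc ((j : ℝ) + 1) / (m + 1) - x ≤ ((j : ℝ) + 1) / (m + 1) - j / (m + 1) := by linarith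
      _ = 1 / (m + 1) := by ring
      _ ≤ δ := hm.le
  rw [← Real.dist_eq]
  exact hfδ x ⟨hx0, hx1⟩ _ ⟨by positivity, hcj⟩ hdist

section Weight

variable {α : ℝ}

theorem intervalIntegrable_mul_rpow_sub_one_mul (hα : 0 < α) {f : ℝ → ℝ} {c d : ℝ}
    (hf : ContinuousOn f (Set.uIcc c d)) :
    IntervalIntegrable (fun x => α * x ^ (α - 1) * f x) MeasureTheory.volume c d :=
  ((intervalIntegrable_rpow' (by linarith)).const_mul α).mul_continuousOn hf

theorem integral_mul_rpow_sub_one (hα : 0 < α) (c d : ℝ) :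
    ∫ x in c..d, α * x ^ (α - 1) = d ^ α - c ^ α := by
  rw [integral_const_mul, integral_rpow (Or.inl (by linarith)), sub_add_cancel]
  field_simp

theorem abs_integral_mul_rpow_sub_one_mul_sub_le (hα : 0 < α) {f : ℝ → ℝ} {c d p ε : ℝ}
    (hc : 0 ≤ c) (hcd : c ≤ d) (hf : ContinuousOn f (Set.Icc c d))
    (hfp : ∀ x ∈ Set.Icc c d, |f x - p| ≤ ε) :
    |(∫ x in c..d, α * x ^ (α - 1) * f x) - p * (d ^ α - c ^ α)| ≤ ε * (d ^ α - c ^ α) := by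
  have hw : IntervalIntegrable (fun x => α * x ^ (α - 1)) MeasureTheory.volume c d :=
    (intervalIntegrable_rpow' (by linarith)).const_mul α
  have hsub : (∫ x in c..d, α * x ^ (α - 1) * f x) - p * (d ^ α - c ^ α)
      = ∫ x in c..d, α * x ^ (α - 1) * (f x - p) := by
    simp_rw [mul_sub]
    rw [integral_sub (intervalIntegrable_mul_rpow_sub_one_mul hα
      (by rwa [Set.uIcc_of_le hcd])) (hw.mul_const p), integral_mul_const,
      integral_mul_rpow_sub_one hα]
    ring
  rw [hsub, ← integral_mul_rpow_sub_one hα, ← integral_const_mul, ← Real.norm_eq_abs]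
  refine (norm_integral_le_of_norm_le hcd (MeasureTheory.ae_of_all _ fun x hx => ?_)
    (hw.const_mul ε))
  have hx0 : 0 ≤ x := hc.trans hx.1.le
  rw [Real.norm_eq_abs, abs_mul, abs_of_nonneg (by positivity), mul_comm ε]
  exact mul_le_mul_of_nonneg_left (hfp x ⟨hx.1.le, hx.2⟩) (by positivity)

end Weight

theorem div_mem_Icc_of_mem_Ioc_floor {s t : ℝ} (hs : 0 ≤ s) (hst : s ≤ t) {n k : ℕ}
    (hk : k ∈ Ioc ⌊s * n⌋₊ ⌊t * n⌋₊) : (k : ℝ) / n ∈ Set.Icc s t := by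
  rcases n.eq_zero_or_pos with rfl | hn
  · simp at hk
  have hnr : (0 : ℝ) < n := by exact_mod_cast hn
  rw [mem_Ioc, Nat.floor_lt (by positivity),
    Nat.le_floor_iff (mul_nonneg (hs.trans hst) n.cast_nonneg)] at hk
  exact ⟨(le_div_iff₀ hnr).2 hk.1.le, (div_le_iff₀ hnr).2 hk.2⟩

namespace IsFinePartition

variable {f : ℝ → ℝ} {ε : ℝ} {m : ℕ} {c : ℕ → ℝ} {α L : ℝ} {a : ℕ → ℝ}

theorem abs_sum_sub_integral_le (hc : IsFinePartition f ε m c) (hα : 0 < α)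
    (hf : ContinuousOn f (Set.Icc 0 1)) :
    |∑ j ∈ range m, f (c (j + 1)) * (c (j + 1) ^ α - c j ^ α)
      - ∫ x in (0 : ℝ)..1, α * x ^ (α - 1) * f x| ≤ ε := by
  have hsplit := sum_integral_adjacent_intervals fun j (hj : j < m) =>
    intervalIntegrable_mul_rpow_sub_one_mul hα
      (hf.mono ((Set.uIcc_of_le (hc.mono j.le_succ)).trans_subset (hc.Icc_subset hj)))
  rw [hc.zero, hc.last] at hsplit
  rw [← hsplit, ← sum_sub_distrib]
  calc _ ≤ ∑ j ∈ range m, |f (c (j + 1)) * (c (j + 1) ^ α - c j ^ α)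
        - ∫ x in c j..c (j + 1), α * x ^ (α - 1) * f x| := abs_sum_le_sum_abs _ _
    _ ≤ ∑ j ∈ range m, ε * (c (j + 1) ^ α - c j ^ α) := sum_le_sum fun j hj => by
        have hj := mem_range.1 hj
        rw [abs_sub_comm]
        exact abs_integral_mul_rpow_sub_one_mul_sub_le hα (hc.nonneg j) (hc.mono j.le_succ)
          (hf.mono (hc.Icc_subset hj)) (hc.osc j hj)
    _ = ε := by
        rw [← mul_sum, sum_range_sub (fun j => c j ^ α), hc.last, hc.zero, Real.one_rpow,
          Real.zero_rpow hα.ne', sub_zero, mul_one]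

theorem abs_sum_sub_sum_le (hc : IsFinePartition f ε m c) (ha : ∀ k, 0 ≤ a k) (n : ℕ) :
    |∑ k ∈ Icc 1 n, f (k / n) * a k
      - ∑ j ∈ range m, f (c (j + 1)) * ∑ k ∈ Ioc ⌊c j * n⌋₊ ⌊c (j + 1) * n⌋₊, a k|
      ≤ ε * ∑ k ∈ Icc 1 n, a k := by
  have hN : Monotone fun j => ⌊c j * n⌋₊ := fun i j hij =>
    Nat.floor_mono (by gcongr; exact hc.mono hij)
  have hsplit (g : ℕ → ℝ) : ∑ k ∈ Icc 1 n, g k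
      = ∑ j ∈ range m, ∑ k ∈ Ioc ⌊c j * n⌋₊ ⌊c (j + 1) * n⌋₊, g k := by
    simpa [hc.last] using sum_Icc_eq_sum_range_sum_Ioc g hN (by simp [hc.zero]) m
  rw [hsplit, hsplit, mul_sum, ← sum_sub_distrib]
  refine (abs_sum_le_sum_abs _ _).trans (sum_le_sum fun j hj => ?_)
  rw [mul_sum, mul_sum, ← sum_sub_distrib]
  refine (abs_sum_le_sum_abs _ _).trans (sum_le_sum fun k hk => ?_)
  rw [← sub_mul, abs_mul, abs_of_nonneg (ha k)]
  exact mul_le_mul_of_nonneg_right (hc.osc j (mem_range.1 hj) _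
    (div_mem_Icc_of_mem_Ioc_floor (hc.nonneg j) (hc.mono j.le_succ) hk)) (ha k)

theorem tendsto_sum_mul_sum_Ioc (hc : IsFinePartition f ε m c) (hα : 0 < α)
    (hL : Tendsto (fun n : ℕ => (1 / (n : ℝ) ^ α) * ∑ k ∈ Icc 1 n, a k) atTop (𝓝 L)) :
    Tendsto (fun n : ℕ => (1 / (n : ℝ) ^ α) *
        ∑ j ∈ range m, f (c (j + 1)) * ∑ k ∈ Ioc ⌊c j * n⌋₊ ⌊c (j + 1) * n⌋₊, a k)
      atTop (𝓝 (L * ∑ j ∈ range m, f (c (j + 1)) * (c (j + 1) ^ α - c j ^ α))) := by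
  convert tendsto_finsetSum (range m) fun j _ =>
    (tendsto_sum_Ioc_floor_mul_div_rpow hα hL (hc.nonneg j) (hc.mono j.le_succ)).const_mul
      (f (c (j + 1))) using 2
  · rw [mul_sum]
    exact sum_congr rfl fun j _ => mul_left_comm _ _ _
  · rw [mul_sum]
    exact sum_congr rfl fun j _ => mul_left_comm _ _ _

end IsFinePartition

theorem stmt_0 (α : ℝ) (hα : 0 < α) (a : ℕ → ℝ) (ha : ∀ n, 0 < a n) (L : ℝ)
    (hL : Filter.Tendsto (fun n : ℕ => (1 / (n : ℝ) ^ α) * ∑ k ∈ Finset.Icc 1 n, a k)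
      Filter.atTop (nhds L))
    (f : ℝ → ℝ) (hf : ContinuousOn f (Set.Icc 0 1)) :
    Filter.Tendsto
      (fun n : ℕ => (1 / (n : ℝ) ^ α) * ∑ k ∈ Finset.Icc 1 n, f (k / n) * a k)
      Filter.atTop (nhds (L * ∫ x in (0:ℝ)..1, α * x ^ (α - 1) * f x)) := by
  refine tendsto_of_forall_approx (|L| + 1) fun ε hε => ?_
  obtain ⟨m, c, hc⟩ := hf.exists_isFinePartition hε
  refine ⟨_, _, hc.tendsto_sum_mul_sum_Ioc hα hL, ?_, ?_⟩
  · rw [Real.dist_eq, ← mul_sub, abs_mul]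
    nlinarith [abs_nonneg L, hc.abs_sum_sub_integral_le hα hf]
  · filter_upwards [hL.eventually (gt_mem_nhds (lt_add_one L))] with n hn
    rw [Real.dist_eq, ← mul_sub, abs_mul, abs_of_nonneg (by positivity)]
    calc _ ≤ 1 / (n : ℝ) ^ α * (ε * ∑ k ∈ Icc 1 n, a k) := by
          gcongr; exact hc.abs_sum_sub_sum_le (fun k => (ha k).le) n
      _ = ε * (1 / (n : ℝ) ^ α * ∑ k ∈ Icc 1 n, a k) := by ring
      _ ≤ ε * (L + 1) := by gcongr
      _ ≤ (|L| + 1) * ε := by nlinarith [le_abs_self L]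
end

section
/- Let α > 0 and (a_n) a sequence of positive reals with (1/n^α) ∑_{k=1}^n a_k → L. Then for every nonnegative integer p, (1/n^(α+p)) ∑_{k=1}^n k^p a_k → αL/(α+p). -/
/-!
Induct on `p`; each step multiplies the weights by `k`. With `S n = ∑_{k ≤ n} a k`, Abel summation
gives `∑_{k ≤ n} k a k = n S n - ∑_{m < n} S m`. Since `S m ≈ L m^α`, a weighted Cesàro argument
gives `∑_{m < n} S m ≈ L ∑_{m < n} m^α ≈ L n^(α+1)/(α+1)`, the last step by comparing the sum with
`∫₀ⁿ x^α dx`. Hence exponent `β` and limit `M` become `β + 1` and `M - M/(β+1) = β M/(β+1)`, and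
these factors telescope to `α L/(α+p)`.
-/

open Filter Finset Asymptotics Topology

theorem Filter.Tendsto.sum_range_div_sum_range {f g : ℕ → ℝ} {L : ℝ}
    (h : Tendsto (fun n => f n / g n) atTop (𝓝 L)) (hg : 0 ≤ g)
    (hg_ne : ∀ᶠ n in atTop, g n ≠ 0)
    (hsum : Tendsto (fun n => ∑ i ∈ range n, g i) atTop atTop) :
    Tendsto (fun n => (∑ i ∈ range n, f i) / ∑ i ∈ range n, g i) atTop (𝓝 L) := by
  have hsmall : (fun n => f n - L * g n) =o[atTop] g := by
    refine (((isLittleO_one_iff ℝ).2 (tendsto_sub_nhds_zero_iff.2 h)).mul_isBigO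
      (isBigO_refl g atTop)).congr' ?_ (by simp)
    filter_upwards [hg_ne] with n hn
    field_simp
  refine tendsto_sub_nhds_zero_iff.1 <|
    (hsmall.sum_range hg hsum).tendsto_div_nhds_zero.congr' ?_
  filter_upwards [hsum.eventually_gt_atTop 0] with n hn
  rw [sum_sub_distrib, ← mul_sum, sub_div, mul_div_cancel_right₀ _ hn.ne']

section PowerSums

variable {α : ℝ} (hα : 0 ≤ α)
include hα

lemma integral_rpow_zero_natCast (n : ℕ) :
    ∫ x in (0 : ℝ)..n, x ^ α = (n : ℝ) ^ (α + 1) / (α + 1) := by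
  rw [integral_rpow (Or.inl (by linarith)), Real.zero_rpow (by positivity), sub_zero]

lemma sum_range_rpow_le (n : ℕ) :
    ∑ i ∈ range n, (i : ℝ) ^ α ≤ (n : ℝ) ^ (α + 1) / (α + 1) := by
  have hmono : MonotoneOn (fun x : ℝ => x ^ α) (Set.Icc 0 (0 + n)) :=
    (Real.monotoneOn_rpow_Ici_of_exponent_nonneg hα).mono Set.Icc_subset_Ici_self
  simpa [integral_rpow_zero_natCast hα] using hmono.sum_le_integral

lemma le_sum_range_succ_rpow (n : ℕ) :
    (n : ℝ) ^ (α + 1) / (α + 1) ≤ ∑ i ∈ range (n + 1), (i : ℝ) ^ α := by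
  have hmono : MonotoneOn (fun x : ℝ => x ^ α) (Set.Icc 0 (0 + n)) :=
    (Real.monotoneOn_rpow_Ici_of_exponent_nonneg hα).mono Set.Icc_subset_Ici_self
  have h := hmono.integral_le_sum
  simp only [zero_add, integral_rpow_zero_natCast hα] at h
  rw [sum_range_succ']
  simpa using h.trans (le_add_of_nonneg_right (Real.rpow_nonneg le_rfl α))

theorem tendsto_sum_range_rpow_div_rpow :
    Tendsto (fun n : ℕ => (∑ i ∈ range n, (i : ℝ) ^ α) / (n : ℝ) ^ (α + 1)) atTop
      (𝓝 (1 / (α + 1))) := by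
  rw [← tendsto_add_atTop_iff_nat 1]
  have hlow : Tendsto (fun n : ℕ => ((n : ℝ) / (n + 1)) ^ (α + 1) / (α + 1)) atTop
      (𝓝 (1 / (α + 1))) := by
    simpa using ((Real.continuousAt_rpow_const 1 (α + 1) (Or.inl one_ne_zero)).tendsto.comp
      (tendsto_natCast_div_add_atTop (1 : ℝ))).div_const (α + 1)
  refine tendsto_of_tendsto_of_tendsto_of_le_of_le hlow tendsto_const_nhds (fun n => ?_)
    (fun n => ?_)
  · rw [Real.div_rpow (by positivity) (by positivity), div_div, mul_comm, ← div_div]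
    push_cast
    gcongr
    exact_mod_cast le_sum_range_succ_rpow hα n
  · have hpos : (0 : ℝ) < (n + 1 : ℕ) ^ (α + 1) := by positivity
    rw [div_le_iff₀ hpos, one_div_mul_eq_div]
    exact sum_range_rpow_le hα (n + 1)

theorem tendsto_sum_range_rpow_atTop :
    Tendsto (fun n : ℕ => ∑ i ∈ range n, (i : ℝ) ^ α) atTop atTop := by
  refine ((tendsto_sum_range_rpow_div_rpow hα).pos_mul_atTop (by positivity)
    ((tendsto_rpow_atTop (by linarith : 0 < α + 1)).comp tendsto_natCast_atTop_atTop)).congr' ?_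
  filter_upwards [eventually_gt_atTop 0] with n hn
  exact div_mul_cancel₀ _ (by positivity)

theorem Filter.Tendsto.sum_range_div_rpow {S : ℕ → ℝ} {L : ℝ}
    (hS : Tendsto (fun n : ℕ => S n / (n : ℝ) ^ α) atTop (𝓝 L)) :
    Tendsto (fun n : ℕ => (∑ i ∈ range n, S i) / (n : ℝ) ^ (α + 1)) atTop
      (𝓝 (L / (α + 1))) := by
  have hW := tendsto_sum_range_rpow_atTop hα
  have hratio := hS.sum_range_div_sum_range (fun i => Real.rpow_nonneg i.cast_nonneg α)
    (by filter_upwards [eventually_gt_atTop 0] with n hn; positivity) hW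
  rw [← mul_one_div]
  refine (hratio.mul (tendsto_sum_range_rpow_div_rpow hα)).congr' ?_
  filter_upwards [hW.eventually_gt_atTop 0] with n hn
  exact div_mul_div_cancel₀ hn.ne'

end PowerSums

lemma sum_Icc_natCast_mul (a : ℕ → ℝ) (n : ℕ) :
    ∑ k ∈ Icc 1 n, (k : ℝ) * a k
      = n * ∑ k ∈ Icc 1 n, a k - ∑ m ∈ range n, ∑ k ∈ Icc 1 m, a k := by
  induction n with
  | zero => simp
  | succ n ih =>
    rw [sum_Icc_succ_top (by omega), sum_Icc_succ_top (by omega), sum_range_succ, ih]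
    push_cast
    ring

theorem Filter.Tendsto.sum_Icc_natCast_mul_div_rpow {α L : ℝ} (hα : 0 ≤ α) {a : ℕ → ℝ}
    (hL : Tendsto (fun n : ℕ => (∑ k ∈ Icc 1 n, a k) / (n : ℝ) ^ α) atTop (𝓝 L)) :
    Tendsto (fun n : ℕ => (∑ k ∈ Icc 1 n, (k : ℝ) * a k) / (n : ℝ) ^ (α + 1)) atTop
      (𝓝 (α * L / (α + 1))) := by
  have hfirst : Tendsto (fun n : ℕ => n * (∑ k ∈ Icc 1 n, a k) / (n : ℝ) ^ (α + 1)) atTop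
      (𝓝 L) := by
    refine hL.congr' ?_
    filter_upwards [eventually_gt_atTop 0] with n hn
    have hn : (0 : ℝ) < n := by exact_mod_cast hn
    rw [Real.rpow_add_one hn.ne', mul_comm _ (n : ℝ), mul_div_mul_left _ _ hn.ne']
  have hlim : L - L / (α + 1) = α * L / (α + 1) := by
    field_simp
    ring
  rw [← hlim]
  refine (hfirst.sub (hL.sum_range_div_rpow hα)).congr fun n => ?_
  rw [sum_Icc_natCast_mul, sub_div]

theorem stmt_3_general (α : ℝ) (hα : 0 < α) (a : ℕ → ℝ) (L : ℝ)
    (hL : Filter.Tendsto (fun n : ℕ => (1 / (n : ℝ) ^ α) * ∑ k ∈ Finset.Icc 1 n, a k)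
      Filter.atTop (nhds L)) (p : ℕ) :
    Filter.Tendsto
      (fun n : ℕ => (1 / (n : ℝ) ^ (α + p)) * ∑ k ∈ Finset.Icc 1 n, (k : ℝ) ^ p * a k)
      Filter.atTop (nhds (α * L / (α + p))) := by
  simp only [one_div_mul_eq_div] at hL ⊢
  induction p with
  | zero => simpa [mul_div_cancel_left₀ L hα.ne'] using hL
  | succ p ih =>
    have hp : 0 < α + p := by positivity
    have h := ih.sum_Icc_natCast_mul_div_rpow hp.le
    rw [mul_div_cancel₀ _ hp.ne'] at h
    push_cast
    simpa only [← add_assoc, pow_succ', mul_assoc] using h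

theorem stmt_3 (α : ℝ) (hα : 0 < α) (a : ℕ → ℝ) (ha : ∀ n, 0 < a n) (L : ℝ)
    (hL : Filter.Tendsto (fun n : ℕ => (1 / (n : ℝ) ^ α) * ∑ k ∈ Finset.Icc 1 n, a k)
      Filter.atTop (nhds L)) (p : ℕ) :
    Filter.Tendsto
      (fun n : ℕ => (1 / (n : ℝ) ^ (α + p)) * ∑ k ∈ Finset.Icc 1 n, (k : ℝ) ^ p * a k)
      Filter.atTop (nhds (α * L / (α + p))) :=
  stmt_3_general α hα a L hL p
end

section
/- The limit as n → ∞ of ∑_{k=1}^n (arctan(k/n)/(n+k)) · (φ(k)/k) equals (3 log 2)/(4π), where φ is the Euler totient function. -/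
/-!
With `g x = arctan x / (1 + x)` the summand is `g (k / n) / n * φ(k) / k`. Expanding
`φ(k) / k = ∑_{d ∣ k} μ(d) / d` and writing `k = d m` turns the sum into
`∑_d μ(d) / d * (1 / n) ∑_{m ≤ n / d} g (d m / n)`. For fixed `d` the inner sum is a Riemann sum
of mesh `d / n` and tends to `(1 / d) ∫₀¹ g`; it is also `O(1 / d)` uniformly in `n`, so dominated
convergence gives the limit `(∑_d μ(d) / d²) ∫₀¹ g = 6 / π² * π log 2 / 8`. The integral is
computed with the substitution `x = (1 - t) / (1 + t)`, under which `arctan x = π / 4 - arctan t`,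
so that it equals `π / 4 * log 2` minus itself.
-/

open Finset Real Filter Topology intervalIntegral
open scoped NNReal Nat ArithmeticFunction.Moebius

theorem sum_Icc_sum_divisors_eq {M : Type*} [AddCommMonoid M] (n : ℕ) (F : ℕ → ℕ → M) :
    ∑ k ∈ Icc 1 n, ∑ d ∈ k.divisors, F d k = ∑ d ∈ Icc 1 n, ∑ m ∈ Icc 1 (n / d), F d (d * m) := by
  rw [sum_comm' (t' := Icc 1 n) (s' := fun d => (Icc 1 (n / d)).image (d * ·))]
  · refine sum_congr rfl fun d hd => sum_image fun a _ b _ h => ?_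
    exact Nat.eq_of_mul_eq_mul_left (by simp only [mem_Icc] at hd; omega) h
  · intro k d
    simp only [mem_Icc, Nat.mem_divisors, mem_image]
    constructor
    · rintro ⟨⟨hk, hkn⟩, ⟨m, rfl⟩, -⟩
      have hd := Nat.pos_of_mul_pos_right (a := d) (b := m) (by omega)
      have hm := Nat.pos_of_mul_pos_left (a := d) (b := m) (by omega)
      exact ⟨⟨m, ⟨hm, (Nat.le_div_iff_mul_le hd).2 (by rwa [mul_comm] at hkn)⟩, rfl⟩, hd,
        le_trans (Nat.le_mul_of_pos_right d hm) hkn⟩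
    · rintro ⟨⟨m, ⟨hm, hmn⟩, rfl⟩, hd, hdn⟩
      have hdm : d * m ≤ n := by rw [mul_comm]; exact (Nat.le_div_iff_mul_le hd).1 hmn
      exact ⟨⟨Nat.mul_pos hd hm, hdm⟩, dvd_mul_right d m, (Nat.mul_pos hd hm).ne'⟩

theorem Nat.totient_div_self_eq_sum_moebius {k : ℕ} (hk : k ≠ 0) :
    (φ k : ℝ) / k = ∑ d ∈ k.divisors, (μ d : ℝ) / d := by
  have hφ := (ArithmeticFunction.sum_eq_iff_sum_smul_moebius_eq (R := ℝ) (f := fun i => (φ i : ℝ))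
    (g := fun i => (i : ℝ))).mp (fun n _ => mod_cast Nat.sum_totient n) k (Nat.pos_of_ne_zero hk)
  rw [← hφ, sum_div, ← Nat.sum_divisorsAntidiagonal (fun d _ => (μ d : ℝ) / d)]
  refine sum_congr rfl fun x hx => ?_
  obtain ⟨rfl, hk⟩ := Nat.mem_divisorsAntidiagonal.mp hx
  rw [zsmul_eq_mul, Nat.cast_mul]
  field_simp [left_ne_zero_of_mul hk, right_ne_zero_of_mul hk]

theorem sum_Icc_mul_totient_div_eq (n : ℕ) (f : ℕ → ℝ) :
    ∑ k ∈ Icc 1 n, f k * (φ k / k) =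
      ∑ d ∈ Icc 1 n, (μ d : ℝ) / d * ∑ m ∈ Icc 1 (n / d), f (d * m) := by
  calc _ = ∑ k ∈ Icc 1 n, ∑ d ∈ k.divisors, (μ d : ℝ) / d * f k := sum_congr rfl fun k hk => by
          rw [Nat.totient_div_self_eq_sum_moebius (by simp only [mem_Icc] at hk; omega), mul_sum]
          simp only [mul_comm]
    _ = _ := by simp only [sum_Icc_sum_divisors_eq, mul_sum]

theorem tsum_moebius_div_sq : ∑' d : ℕ, (μ d : ℝ) / d ^ 2 = 6 / π ^ 2 := by
  have h2 : (1 : ℝ) < (2 : ℂ).re := by norm_num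
  have hL : LSeries (fun n => (μ n : ℂ)) 2 = 6 / (π : ℂ) ^ 2 := by
    have := ArithmeticFunction.LSeries_zeta_mul_Lseries_moebius h2
    rw [ArithmeticFunction.LSeries_zeta_eq_riemannZeta h2, riemannZeta_two] at this
    have hπ : (π : ℂ) ≠ 0 := Complex.ofReal_ne_zero.2 pi_ne_zero
    field_simp at this ⊢
    linear_combination this
  have hterm (d : ℕ) : LSeries.term (fun n => (μ n : ℂ)) 2 d = (((μ d : ℝ) / d ^ 2 : ℝ) : ℂ) := by
    rcases eq_or_ne d 0 with rfl | hd
    · simp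
    · rw [LSeries.term_of_ne_zero hd]
      push_cast
      rw [Complex.cpow_ofNat]
  apply Complex.ofReal_injective
  rw [Complex.ofReal_tsum, ← tsum_congr hterm]
  push_cast
  exact hL

theorem LipschitzOnWith.abs_mul_apply_right_sub_integral_le {f : ℝ → ℝ} {K : ℝ≥0} {a b : ℝ}
    (hf : LipschitzOnWith K f (Set.Icc a b)) (hab : a ≤ b) :
    |(b - a) * f b - ∫ x in a..b, f x| ≤ K * (b - a) ^ 2 := by
  have hint : IntervalIntegrable f MeasureTheory.volume a b :=
    (hf.continuousOn.mono (Set.uIcc_of_le hab).subset).intervalIntegrable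
  have hb : b ∈ Set.Icc a b := ⟨hab, le_rfl⟩
  have hdiff : (b - a) * f b - ∫ x in a..b, f x = ∫ x in a..b, (f b - f x) := by
    rw [integral_sub intervalIntegrable_const hint, integral_const, smul_eq_mul]
  have hle : ∀ x ∈ Set.uIoc a b, ‖f b - f x‖ ≤ K * (b - a) := fun x hx => by
    rw [Set.uIoc_of_le hab] at hx
    have hx' : x ∈ Set.Icc a b := Set.Ioc_subset_Icc_self hx
    calc ‖f b - f x‖ = dist (f b) (f x) := (dist_eq_norm _ _).symm
      _ ≤ K * dist b x := hf.dist_le_mul b hb x hx'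
      _ ≤ K * (b - a) := by
        rw [dist_eq_norm, norm_eq_abs, abs_of_nonneg (by linarith [hx'.2])]
        gcongr; linarith [hx.1]
  rw [hdiff, ← norm_eq_abs]
  calc _ ≤ K * (b - a) * |b - a| := norm_integral_le_of_norm_le_const hle
    _ = K * (b - a) ^ 2 := by rw [abs_of_nonneg (by linarith)]; ring

theorem LipschitzOnWith.abs_riemannSum_sub_integral_le {f : ℝ → ℝ} {K : ℝ≥0} {C δ : ℝ} {M : ℕ}
    (hf : LipschitzOnWith K f (Set.Icc 0 1)) (hC : ∀ x ∈ Set.Icc (0:ℝ) 1, ‖f x‖ ≤ C)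
    (hδ : 0 < δ) (hM : M * δ ≤ 1) (hM' : 1 ≤ (M + 1) * δ) :
    |δ * ∑ m ∈ Icc 1 M, f (m * δ) - ∫ x in (0:ℝ)..1, f x| ≤ (K + C) * δ := by
  set a : ℕ → ℝ := fun i => i * δ
  have ha : ∀ i ≤ M, a i ∈ Set.Icc 0 1 := fun i hi =>
    ⟨by positivity, le_trans (by simp only [a]; gcongr) hM⟩
  have hint : ∀ x ∈ Set.Icc (0:ℝ) 1, ∀ y ∈ Set.Icc (0:ℝ) 1,
      IntervalIntegrable f MeasureTheory.volume x y := fun x hx y hy =>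
    (hf.continuousOn.mono (Set.uIcc_subset_Icc hx hy)).intervalIntegrable
  have hcells : ∑ i ∈ range M, ∫ x in a i..a (i + 1), f x = ∫ x in (0:ℝ)..a M, f x := by
    simpa [a] using sum_integral_adjacent_intervals fun i hi =>
      hint _ (ha i hi.le) _ (ha (i + 1) hi)
  have hcell : ∀ i < M, |δ * f (a (i + 1)) - ∫ x in a i..a (i + 1), f x| ≤ K * δ ^ 2 :=
    fun i hi => by
      have hδ_eq : a (i + 1) - a i = δ := by simp only [a]; push_cast; ring
      simpa only [hδ_eq] using (hf.mono (Set.Icc_subset_Icc (ha i hi.le).1 (ha (i + 1) hi).2)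
        ).abs_mul_apply_right_sub_integral_le (by linarith)
  have hC0 : 0 ≤ C := (norm_nonneg _).trans (hC 0 ⟨le_rfl, zero_le_one⟩)
  have htail : |∫ x in a M..1, f x| ≤ C * δ := by
    have hbound : ∀ x ∈ Set.uIoc (a M) 1, ‖f x‖ ≤ C := fun x hx => by
      rw [Set.uIoc_of_le (ha M le_rfl).2] at hx
      exact hC x ⟨(ha M le_rfl).1.trans hx.1.le, hx.2⟩
    calc |∫ x in a M..1, f x| ≤ C * |1 - a M| := norm_integral_le_of_norm_le_const hbound
      _ ≤ C * δ := by
        rw [abs_of_nonneg (by linarith [(ha M le_rfl).2])]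
        gcongr
        simp only [a]; linarith
  have hsum : ∑ m ∈ Icc 1 M, f (m * δ) = ∑ i ∈ range M, f (a (i + 1)) := by
    rw [← Ico_add_one_right_eq_Icc, sum_Ico_eq_sum_range]
    simp [a, add_comm]
  rw [hsum, ← integral_add_adjacent_intervals (hint 0 ⟨le_rfl, zero_le_one⟩ _ (ha M le_rfl))
    (hint _ (ha M le_rfl) 1 ⟨zero_le_one, le_rfl⟩), ← hcells, mul_sum, sub_add_eq_sub_sub,
    ← sum_sub_distrib]
  calc _ ≤ ∑ i ∈ range M, |δ * f (a (i + 1)) - ∫ x in a i..a (i + 1), f x|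
        + |∫ x in a M..1, f x| := (abs_sub _ _).trans (add_le_add_left (abs_sum_le_sum_abs _ _) _)
    _ ≤ M * (K * δ ^ 2) + C * δ := by
        gcongr
        · simpa using sum_le_sum fun i hi => hcell i (mem_range.1 hi)
    _ = K * δ * (M * δ) + C * δ := by ring
    _ ≤ K * δ * 1 + C * δ := by gcongr
    _ = (K + C) * δ := by ring

theorem LipschitzOnWith.tendsto_sum_Icc_div {f : ℝ → ℝ} {K : ℝ≥0} {C : ℝ}
    (hf : LipschitzOnWith K f (Set.Icc 0 1)) (hC : ∀ x ∈ Set.Icc (0:ℝ) 1, ‖f x‖ ≤ C)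
    {d : ℕ} (hd : 0 < d) :
    Tendsto (fun n : ℕ => ∑ m ∈ Icc 1 (n / d), f (d * m / n) / n) atTop
      (𝓝 ((∫ x in (0:ℝ)..1, f x) / d)) := by
  have hd' : (0:ℝ) < d := by exact_mod_cast hd
  have hdist : ∀ n : ℕ, 0 < n →
      ‖∑ m ∈ Icc 1 (n / d), f (d * m / n) / n - (∫ x in (0:ℝ)..1, f x) / d‖ ≤ (K + C) / n := by
    intro n hn
    have hn' : (0:ℝ) < n := by exact_mod_cast hn
    have hM : ((n / d : ℕ) : ℝ) * (d / n) ≤ 1 := by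
      rw [mul_div_assoc', div_le_one hn']
      exact_mod_cast Nat.div_mul_le_self n d
    have hM' : 1 ≤ ((n / d : ℕ) + 1 : ℝ) * (d / n) := by
      have : (n : ℝ) ≤ (n / d : ℕ) * d + d := by exact_mod_cast (Nat.lt_div_mul_add hd).le
      rw [mul_div_assoc', one_le_div hn']
      linarith
    have hsum : ∑ m ∈ Icc 1 (n / d), f (d * m / n) / n
        = (d : ℝ)⁻¹ * ((d / n) * ∑ m ∈ Icc 1 (n / d), f (m * (d / n))) := by
      rw [mul_sum, mul_sum]
      refine sum_congr rfl fun m _ => ?_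
      rw [show (d : ℝ) * m / n = m * (d / n) by ring]
      field_simp
    calc _ = (d : ℝ)⁻¹ * |(d / n) * ∑ m ∈ Icc 1 (n / d), f (m * (d / n))
          - ∫ x in (0:ℝ)..1, f x| := by
          rw [hsum, div_eq_inv_mul _ (d : ℝ), ← mul_sub, norm_mul, norm_inv, RCLike.norm_natCast,
            norm_eq_abs]
      _ ≤ (d : ℝ)⁻¹ * ((K + C) * (d / n)) := by
          gcongr
          exact hf.abs_riemannSum_sub_integral_le hC (div_pos hd' hn') hM hM'
      _ = (K + C) / n := by field_simp
  rw [tendsto_iff_norm_sub_tendsto_zero]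
  refine squeeze_zero_norm' ?_ (tendsto_const_div_atTop_nhds_zero_nat ((K : ℝ) + C))
  filter_upwards [eventually_gt_atTop 0] with n hn
  rw [norm_norm]
  exact hdist n hn

theorem norm_sum_Icc_div_le {f : ℝ → ℝ} {C : ℝ} (hC : ∀ x ∈ Set.Icc (0:ℝ) 1, ‖f x‖ ≤ C)
    (n d : ℕ) : ‖∑ m ∈ Icc 1 (n / d), f (d * m / n) / n‖ ≤ C / d := by
  have hC0 : 0 ≤ C := (norm_nonneg _).trans (hC 0 ⟨le_rfl, zero_le_one⟩)
  rcases Nat.eq_zero_or_pos n with rfl | hn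
  · simpa using div_nonneg hC0 d.cast_nonneg
  have hn' : (0:ℝ) < n := by exact_mod_cast hn
  have hterm : ∀ m ∈ Icc 1 (n / d), ‖f (d * m / n) / n‖ ≤ C / n := fun m hm => by
    rw [norm_div, RCLike.norm_natCast]
    gcongr
    refine hC _ ⟨by positivity, ?_⟩
    rw [div_le_one hn']
    exact_mod_cast (Nat.mul_le_mul_left d (mem_Icc.1 hm).2).trans (Nat.mul_div_le n d)
  calc _ ≤ ∑ m ∈ Icc 1 (n / d), C / n := (norm_sum_le _ _).trans (sum_le_sum hterm)
    _ = (n / d : ℕ) * C / n := by simp [mul_div_assoc]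
    _ ≤ (n / d : ℝ) * C / n := by gcongr; exact Nat.cast_div_le
    _ = C / d := by field_simp

theorem LipschitzOnWith.tendsto_sum_mul_totient_div {f : ℝ → ℝ} {K : ℝ≥0}
    (hf : LipschitzOnWith K f (Set.Icc 0 1)) :
    Tendsto (fun n : ℕ => ∑ k ∈ Icc 1 n, f (k / n) / n * (φ k / k)) atTop
      (𝓝 (6 / π ^ 2 * ∫ x in (0:ℝ)..1, f x)) := by
  obtain ⟨C, hC⟩ := isCompact_Icc.exists_bound_of_continuousOn hf.continuousOn
  set F : ℕ → ℕ → ℝ := fun n d => (μ d : ℝ) / d * ∑ m ∈ Icc 1 (n / d), f (d * m / n) / n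
  have hF : ∀ n : ℕ, ∑ k ∈ Icc 1 n, f ((k : ℝ) / n) / n * (φ k / k) = ∑' d, F n d := fun n => by
    rw [sum_Icc_mul_totient_div_eq n (fun k => f (k / n) / n), tsum_eq_sum]
    · push_cast; rfl
    · intro d hd
      obtain rfl | hnd : d = 0 ∨ n < d := by simp only [mem_Icc] at hd; omega
      · simp [F]
      · simp [F, Nat.div_eq_of_lt hnd]
  have hlim : ∀ d, Tendsto (F · d) atTop (𝓝 ((μ d : ℝ) / d ^ 2 * ∫ x in (0:ℝ)..1, f x)) := by
    intro d
    rcases Nat.eq_zero_or_pos d with rfl | hd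
    · simp [F]
    · convert (hf.tendsto_sum_Icc_div hC hd).const_mul ((μ d : ℝ) / d) using 2
      ring
  have hbound : ∀ n d, ‖F n d‖ ≤ C * (1 / d ^ 2) := fun n d => by
    have hμ : ‖(μ d : ℝ) / d‖ ≤ 1 / d := by
      rw [norm_div, RCLike.norm_natCast, norm_eq_abs, ← Int.cast_abs]
      gcongr
      exact_mod_cast ArithmeticFunction.abs_moebius_le_one
    calc ‖F n d‖ ≤ 1 / d * (C / d) := norm_mul_le_of_le hμ (norm_sum_Icc_div_le hC n d)
      _ = C * (1 / d ^ 2) := by ring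
  rw [funext hF, ← tsum_moebius_div_sq, ← tsum_mul_right]
  exact tendsto_tsum_of_dominated_convergence
    ((summable_one_div_nat_pow.2 one_lt_two).mul_left C) hlim (Eventually.of_forall hbound)

theorem arctan_one_sub_div_one_add {t : ℝ} (ht : -1 < t) :
    arctan ((1 - t) / (1 + t)) = π / 4 - arctan t := by
  have hpos : 0 < 1 + t := by linarith
  have hlt : (1 - t) / (1 + t) * t < 1 := by
    rw [div_mul_eq_mul_div, div_lt_one hpos]; nlinarith [sq_nonneg t]
  have hsum : ((1 - t) / (1 + t) + t) / (1 - (1 - t) / (1 + t) * t) = 1 := by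
    rw [div_eq_one_iff_eq (by rw [sub_ne_zero]; exact hlt.ne')]
    field_simp
    ring
  have := arctan_add hlt
  rw [hsum, arctan_one] at this
  linarith

theorem integral_arctan_div_one_add : ∫ x in (0:ℝ)..1, arctan x / (1 + x) = π * log 2 / 8 := by
  set g : ℝ → ℝ := fun x => arctan x / (1 + x)
  have hpos : ∀ t ∈ Set.uIcc (0:ℝ) 1, 0 < 1 + t := fun t ht => by
    rw [Set.uIcc_of_le zero_le_one] at ht; linarith [ht.1]
  have hg : ContinuousOn g (Set.uIcc 0 1) := continuous_arctan.continuousOn.div (by fun_prop)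
    fun x hx => (hpos x hx).ne'
  have hsubst : ∫ t in (0:ℝ)..1, g ((1 - t) / (1 + t)) * (-2 / (1 + t) ^ 2)
      = -∫ x in (0:ℝ)..1, g x := by
    have := integral_comp_mul_deriv' (a := 0) (b := 1) (g := g) (f := fun t => (1 - t) / (1 + t))
      (f' := fun t => -2 / (1 + t) ^ 2) ?_ ?_ ?_
    · simpa [integral_symm 0 1] using this
    · intro t ht
      exact (((hasDerivAt_id' t).const_sub 1).div ((hasDerivAt_id' t).const_add 1)
        (hpos t ht).ne').congr_deriv (by ring)
    · exact continuousOn_const.div (by fun_prop) fun t ht => (pow_pos (hpos t ht) 2).ne'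
    · refine hg.mono ?_
      rintro _ ⟨t, ht, rfl⟩
      rw [Set.uIcc_of_le zero_le_one] at ht ⊢
      have := hpos t (by rw [Set.uIcc_of_le zero_le_one]; exact ht)
      constructor
      · exact div_nonneg (by linarith [ht.2]) this.le
      · rw [div_le_one this]; linarith [ht.1]
  have hintegrand : ∀ t ∈ Set.uIcc (0:ℝ) 1, g ((1 - t) / (1 + t)) * (-2 / (1 + t) ^ 2)
      = -(π / 4 * (1 + t)⁻¹ - g t) := fun t ht => by
    have := hpos t ht
    simp only [g]
    rw [arctan_one_sub_div_one_add (by linarith)]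
    field_simp
    ring
  have hlog : ∫ x in (0:ℝ)..1, (1 + x)⁻¹ = log 2 := by
    rw [integral_comp_add_left (fun x => x⁻¹), integral_inv (by norm_num [Set.uIcc])]
    norm_num
  have hinv : IntervalIntegrable (fun x : ℝ => (1 + x)⁻¹) MeasureTheory.volume 0 1 :=
    (ContinuousOn.inv₀ (by fun_prop) fun x hx => (hpos x hx).ne').intervalIntegrable
  rw [integral_congr hintegrand, integral_neg, neg_inj, integral_sub (hinv.const_mul _)
    hg.intervalIntegrable, integral_const_mul, hlog] at hsubst
  linarith

theorem stmt_4 :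
    Filter.Tendsto
      (fun n : ℕ => ∑ k ∈ Finset.Icc 1 n,
        Real.arctan ((k : ℝ) / n) / ((n : ℝ) + k) * (Nat.totient k / (k : ℝ)))
      Filter.atTop (nhds (3 * Real.log 2 / (4 * Real.pi))) := by
  have hg : ContDiffOn ℝ 1 (fun x => arctan x / (1 + x)) (Set.Icc 0 1) :=
    contDiff_arctan.contDiffOn.div (by fun_prop) fun x hx => by linarith [hx.1]
  obtain ⟨K, hK⟩ := hg.exists_lipschitzOnWith one_ne_zero (convex_Icc 0 1) isCompact_Icc
  have hlim := hK.tendsto_sum_mul_totient_div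
  rw [integral_arctan_div_one_add,
    show 6 / π ^ 2 * (π * log 2 / 8) = 3 * log 2 / (4 * π) by field_simp; ring] at hlim
  refine hlim.congr fun n => sum_congr rfl fun k hk => ?_
  have hn : (0:ℝ) < n := by simp only [mem_Icc] at hk; exact_mod_cast (by omega : 0 < n)
  field_simp
end

section
/- For every continuous function f on [0,1], (1/n²) ∑_{k=1}^n f(k/n) φ(k) converges to (6/π²) ∫_0^1 x f(x) dx. -/
/-!
Since `φ = μ ∗ id`, writing `k = d m` turns `n⁻² ∑_{k ≤ n} f(k/n) φ(k)` into
`∑_d μ(d)/d² · R(d/n)`, where `R(h)` is the Riemann sum of `x f(x)` on `[0, 1]` with mesh `h`.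
For fixed `d`, `R(d/n) → ∫₀¹ x f(x) dx`, and `|R(h)| ≤ sup |x f(x)|` uniformly, so by dominated
convergence (Tannery) the limit is `∫₀¹ x f(x) dx · ∑ μ(d)/d² = ∫₀¹ x f(x) dx / ζ(2)`.
-/

open Finset Set Filter Topology ArithmeticFunction Real intervalIntegral
open scoped ArithmeticFunction.Moebius

theorem abs_mul_sub_integral_le {g : ℝ → ℝ} {a b ε : ℝ} (hab : a ≤ b)
    (hg : IntervalIntegrable g MeasureTheory.volume a b) (hε : ∀ x ∈ Icc a b, |g b - g x| ≤ ε) :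
    |(b - a) * g b - ∫ x in a..b, g x| ≤ ε * (b - a) := by
  have h := norm_integral_le_of_norm_le_const (a := a) (b := b) (f := fun x => g b - g x)
    fun x hx => hε x (Ioc_subset_Icc_self (uIoc_of_le hab ▸ hx))
  rwa [integral_sub intervalIntegrable_const hg, integral_const, smul_eq_mul,
    abs_of_nonneg (sub_nonneg.2 hab), Real.norm_eq_abs] at h

/-- Right-endpoint Riemann sum of `g` on `[0, 1]` with mesh `h`; the last, incomplete cell
`[⌊1/h⌋ h, 1]` is left out. -/
noncomputable def riemannSum (g : ℝ → ℝ) (h : ℝ) : ℝ := h * ∑ j ∈ Icc 1 ⌊h⁻¹⌋₊, g (j * h)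

theorem floor_inv_mul_le_one {h : ℝ} (hh : 0 ≤ h) : ⌊h⁻¹⌋₊ * h ≤ 1 :=
  (mul_le_mul_of_nonneg_right (Nat.floor_le (inv_nonneg.2 hh)) hh).trans inv_mul_le_one

theorem mul_mem_Icc_of_le_floor_inv {h : ℝ} (hh : 0 ≤ h) {j : ℕ} (hj : j ≤ ⌊h⁻¹⌋₊) :
    j * h ∈ Icc (0 : ℝ) 1 :=
  ⟨by positivity,
    (mul_le_mul_of_nonneg_right (by exact_mod_cast hj) hh).trans (floor_inv_mul_le_one hh)⟩

theorem abs_riemannSum_le {g : ℝ → ℝ} {C h : ℝ} (hC : ∀ x ∈ Icc (0 : ℝ) 1, |g x| ≤ C)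
    (hh : 0 ≤ h) :
    |riemannSum g h| ≤ C := by
  have hC0 : 0 ≤ C := (abs_nonneg _).trans (hC 0 (by simp))
  calc |riemannSum g h| ≤ h * ∑ j ∈ Icc 1 ⌊h⁻¹⌋₊, |g (j * h)| := by
        rw [riemannSum, abs_mul, abs_of_nonneg hh]
        exact mul_le_mul_of_nonneg_left (abs_sum_le_sum_abs _ _) hh
    _ ≤ h * ∑ j ∈ Icc 1 ⌊h⁻¹⌋₊, C := by
        gcongr with j hj
        exact hC _ (mul_mem_Icc_of_le_floor_inv hh (mem_Icc.1 hj).2)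
    _ = (⌊h⁻¹⌋₊ * h) * C := by
        simp only [sum_const, Nat.card_Icc, add_tsub_cancel_right, nsmul_eq_mul]
        ring
    _ ≤ C := mul_le_of_le_one_left hC0 (floor_inv_mul_le_one hh)

theorem abs_riemannSum_sub_integral_le {g : ℝ → ℝ} {C ε h : ℝ} (hg : ContinuousOn g (Icc 0 1))
    (hC : ∀ x ∈ Icc (0 : ℝ) 1, |g x| ≤ C)
    (hε : ∀ x ∈ Icc (0 : ℝ) 1, ∀ y ∈ Icc (0 : ℝ) 1, |x - y| ≤ h → |g x - g y| ≤ ε) (hh : 0 < h) :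
    |riemannSum g h - ∫ x in (0 : ℝ)..1, g x| ≤ ε + C * h := by
  set M := ⌊h⁻¹⌋₊
  set a : ℕ → ℝ := fun i => i * h with ha
  have hC0 : 0 ≤ C := (abs_nonneg _).trans (hC 0 (by simp))
  have hε0 : 0 ≤ ε := (abs_nonneg _).trans (hε 0 (by simp) 0 (by simp) (by simp [hh.le]))
  have hmem : ∀ i ≤ M, a i ∈ Icc (0 : ℝ) 1 := fun i hi => mul_mem_Icc_of_le_floor_inv hh.le hi
  have hstep : ∀ i, a (i + 1) - a i = h := fun i => by simp only [ha]; push_cast; ring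
  have hint : ∀ {x y : ℝ}, x ∈ Icc (0 : ℝ) 1 → y ∈ Icc (0 : ℝ) 1 →
      IntervalIntegrable g MeasureTheory.volume x y :=
    fun hx hy => (hg.mono (uIcc_subset_Icc hx hy)).intervalIntegrable
  have hsum : riemannSum g h = ∑ i ∈ range M, (a (i + 1) - a i) * g (a (i + 1)) := by
    rw [riemannSum, mul_sum, show Finset.Icc 1 M = Finset.Ico 1 (M + 1) from rfl,
      sum_Ico_eq_sum_range]
    simp only [hstep, add_tsub_cancel_right]
    exact sum_congr rfl fun i _ => by rw [add_comm 1 i]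
  have hsplit : ∫ x in (0 : ℝ)..1, g x
      = (∑ i ∈ range M, ∫ x in a i..a (i + 1), g x) + ∫ x in a M..1, g x := by
    rw [← integral_add_adjacent_intervals (b := a M) (hint (by simp) (hmem M le_rfl))
        (hint (hmem M le_rfl) (by simp)),
      sum_integral_adjacent_intervals fun i hi => hint (hmem i hi.le) (hmem (i + 1) hi)]
    simp [ha]
  have hcell : ∀ i ∈ range M,
      |(a (i + 1) - a i) * g (a (i + 1)) - ∫ x in a i..a (i + 1), g x| ≤ ε * h := by
    intro i hi
    have hi' : i + 1 ≤ M := mem_range.1 hi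
    rw [← hstep i]
    refine abs_mul_sub_integral_le (by linarith [hstep i])
      (hint (hmem i (by omega)) (hmem _ hi')) fun x hx => hε _ (hmem _ hi') x
        ⟨(hmem i (by omega)).1.trans hx.1, hx.2.trans (hmem _ hi').2⟩ ?_
    rw [abs_of_nonneg (by linarith [hx.2])]
    linarith [hx.1, hstep i]
  have htail : |∫ x in a M..1, g x| ≤ C * h := by
    have hgap : 1 - a M ≤ h := by
      have := Nat.lt_floor_add_one h⁻¹
      simp only [ha]
      rw [inv_lt_iff_one_lt_mul₀ hh] at this
      nlinarith
    have hbound : ∀ x ∈ uIoc (a M) 1, ‖g x‖ ≤ C := by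
      intro x hx
      rw [uIoc_of_le (hmem M le_rfl).2] at hx
      exact hC x ⟨(hmem M le_rfl).1.trans hx.1.le, hx.2⟩
    calc |∫ x in a M..1, g x| ≤ C * |1 - a M| := norm_integral_le_of_norm_le_const hbound
      _ ≤ C * h := by
          rw [abs_of_nonneg (sub_nonneg.2 (hmem M le_rfl).2)]
          exact mul_le_mul_of_nonneg_left hgap hC0
  rw [hsum, hsplit]
  calc _ = |(∑ i ∈ range M, ((a (i + 1) - a i) * g (a (i + 1)) - ∫ x in a i..a (i + 1), g x))
          - ∫ x in a M..1, g x| := by rw [sum_sub_distrib]; ring_nf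
    _ ≤ (∑ i ∈ range M, |(a (i + 1) - a i) * g (a (i + 1)) - ∫ x in a i..a (i + 1), g x|)
          + |∫ x in a M..1, g x| :=
        (abs_sub _ _).trans (add_le_add (abs_sum_le_sum_abs _ _) le_rfl)
    _ ≤ (∑ _i ∈ range M, ε * h) + C * h := add_le_add (sum_le_sum hcell) htail
    _ = ε * (M * h) + C * h := by simp only [sum_const, card_range, nsmul_eq_mul]; ring
    _ ≤ ε + C * h := by
        gcongr
        exact mul_le_of_le_one_right hε0 (floor_inv_mul_le_one hh.le)

theorem tendsto_riemannSum {g : ℝ → ℝ} (hg : ContinuousOn g (Icc 0 1)) :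
    Tendsto (riemannSum g) (𝓝[>] 0) (𝓝 (∫ x in (0 : ℝ)..1, g x)) := by
  obtain ⟨C, hC⟩ := isCompact_Icc.exists_bound_of_continuousOn hg
  have hC0 : 0 ≤ C := (norm_nonneg _).trans (hC 0 (by simp))
  rw [Metric.tendsto_nhdsWithin_nhds]
  intro ε hε
  obtain ⟨δ, hδ, hgδ⟩ := Metric.uniformContinuousOn_iff.1
    (isCompact_Icc.uniformContinuousOn_of_continuous hg) (ε / 2) (half_pos hε)
  refine ⟨min δ (ε / (2 * (C + 1))), by positivity, fun h (hh : 0 < h) hhδ => ?_⟩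
  rw [Real.dist_eq, sub_zero, abs_of_pos hh, lt_min_iff] at hhδ
  have hCh : C * h < ε / 2 := calc
    C * h ≤ (C + 1) * h := by gcongr; linarith
    _ < (C + 1) * (ε / (2 * (C + 1))) := by gcongr; exact hhδ.2
    _ = ε / 2 := by field_simp
  calc dist (riemannSum g h) (∫ x in (0 : ℝ)..1, g x) ≤ ε / 2 + C * h :=
        abs_riemannSum_sub_integral_le hg hC
          (fun x hx y hy hxy => (hgδ x hx y hy (hxy.trans_lt hhδ.1)).le) hh
    _ < ε := by linarith

theorem riemannSum_div_natCast (g : ℝ → ℝ) (d n : ℕ) :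
    riemannSum g (d / n) = d / n * ∑ j ∈ Finset.Icc 1 (n / d), g (j * (d / n)) := by
  rw [riemannSum, inv_div, Nat.floor_div_eq_div]

theorem tendsto_riemannSum_div_atTop {g : ℝ → ℝ} (hg : ContinuousOn g (Icc 0 1)) {c : ℝ}
    (hc : 0 < c) :
    Tendsto (fun n : ℕ => riemannSum g (c / n)) atTop (𝓝 (∫ x in (0 : ℝ)..1, g x)) :=
  (tendsto_riemannSum hg).comp <| tendsto_nhdsWithin_iff.2
    ⟨tendsto_const_div_atTop_nhds_zero_nat c,
      (eventually_gt_atTop 0).mono fun _ hn => div_pos hc (Nat.cast_pos.2 hn)⟩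

theorem sum_Ioc_mul_apply_mul_eq_sum_sum {R : Type*} [CommSemiring R]
    (f g : ArithmeticFunction R) (F : ℕ → R) (N : ℕ) :
    ∑ n ∈ Ioc 0 N, (f * g) n * F n
      = ∑ d ∈ Ioc 0 N, f d * ∑ m ∈ Ioc 0 (N / d), g m * F (d * m) := by
  simp only [mul_apply, sum_mul, mul_sum, ← mul_assoc]
  rw [sum_sigma', sum_sigma']
  refine sum_nbij' (fun x => ⟨x.2.1, x.2.2⟩) (fun y => ⟨y.1 * y.2, (y.1, y.2)⟩) ?_ ?_ ?_ ?_ ?_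
  · rintro ⟨n, d, m⟩ hx
    simp only [mem_sigma, Finset.mem_Ioc, Nat.mem_divisorsAntidiagonal] at hx ⊢
    obtain ⟨⟨hn, hnN⟩, rfl, -⟩ := hx
    have hd := Nat.pos_of_mul_pos_right hn
    have hm := Nat.pos_of_mul_pos_left hn
    refine ⟨⟨hd, (Nat.le_mul_of_pos_right d hm).trans hnN⟩, hm, ?_⟩
    rwa [Nat.le_div_iff_mul_le hd, mul_comm]
  · rintro ⟨d, m⟩ hy
    simp only [mem_sigma, Finset.mem_Ioc, Nat.mem_divisorsAntidiagonal] at hy ⊢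
    obtain ⟨⟨hd, -⟩, hm, hmN⟩ := hy
    rw [Nat.le_div_iff_mul_le hd, mul_comm] at hmN
    exact ⟨⟨Nat.mul_pos hd hm, hmN⟩, trivial, (Nat.mul_pos hd hm).ne'⟩
  · rintro ⟨n, d, m⟩ hx
    simp only [mem_sigma, Nat.mem_divisorsAntidiagonal] at hx
    simp [hx.2.1]
  · intro y _; rfl
  · rintro ⟨n, d, m⟩ hx
    simp only [mem_sigma, Nat.mem_divisorsAntidiagonal] at hx
    simp [hx.2.1]

theorem coe_moebius_mul_coe_id_apply {R : Type*} [Ring R] (n : ℕ) :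
    ((μ : ArithmeticFunction R) * (ArithmeticFunction.id : ArithmeticFunction R)) n
      = n.totient := by
  rcases n.eq_zero_or_pos with rfl | hn
  · simp
  rw [mul_apply]
  have := (sum_eq_iff_sum_mul_moebius_eq (f := fun i => (i.totient : R)) (g := fun i => (i : R))).1
    (fun m _ => by rw [← Nat.cast_sum, Nat.sum_totient]) n hn
  simpa [intCoe_apply, natCoe_apply] using this

open scoped LSeries.notation in
theorem hasSum_moebius_div_sq : HasSum (fun d : ℕ => (μ d : ℝ) / d ^ 2) (6 / π ^ 2) := by
  have hs : 1 < (2 : ℂ).re := by norm_num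
  have hL : LSeries (↗μ) 2 = 6 / (π : ℂ) ^ 2 := by
    have h := LSeries_zeta_mul_Lseries_moebius hs
    rw [LSeries_zeta_eq_riemannZeta hs, riemannZeta_two] at h
    have hπ : (π : ℂ) ≠ 0 := Complex.ofReal_ne_zero.2 pi_ne_zero
    field_simp at h ⊢
    linear_combination h
  have hterm : LSeries.term (↗μ) 2 = fun d : ℕ => (((μ d : ℝ) / d ^ 2 : ℝ) : ℂ) := by
    ext (_ | d)
    · simp
    · rw [LSeries.term_of_ne_zero d.succ_ne_zero, ← Nat.cast_ofNat, Complex.cpow_natCast]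
      push_cast; rfl
  have h := (LSeriesSummable_moebius_iff.2 hs).LSeriesHasSum
  rw [LSeriesHasSum, hterm, hL] at h
  exact_mod_cast h

theorem one_div_sq_mul_sum_mul_totient (f : ℝ → ℝ) (n : ℕ) :
    1 / (n : ℝ) ^ 2 * ∑ k ∈ Finset.Icc 1 n, f (k / n) * k.totient
      = ∑' d : ℕ, μ d / d ^ 2 * riemannSum (fun x => x * f x) (d / n) := by
  rw [tsum_eq_sum (s := Finset.Icc 1 n)]
  · calc 1 / (n : ℝ) ^ 2 * ∑ k ∈ Finset.Icc 1 n, f (k / n) * k.totient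
        = 1 / (n : ℝ) ^ 2 * ∑ k ∈ Ioc 0 n,
            ((μ : ArithmeticFunction ℝ) * (ArithmeticFunction.id : ArithmeticFunction ℝ)) k
              * f (k / n) := by
          simp_rw [coe_moebius_mul_coe_id_apply, mul_comm (f _)]
          rfl
      _ = 1 / (n : ℝ) ^ 2
            * ∑ d ∈ Ioc 0 n, (μ d : ℝ) * ∑ m ∈ Ioc 0 (n / d), m * f (d * m / n) := by
          rw [sum_Ioc_mul_apply_mul_eq_sum_sum]
          simp [intCoe_apply, natCoe_apply]
      _ = ∑ d ∈ Finset.Icc 1 n, μ d / d ^ 2 * riemannSum (fun x => x * f x) (d / n) := by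
          rw [mul_sum]
          refine sum_congr rfl fun d hd => ?_
          obtain ⟨hd1, hdn⟩ := Finset.mem_Icc.1 hd
          have hd0 : (d : ℝ) ≠ 0 := Nat.cast_ne_zero.2 (by omega)
          have hn0 : (n : ℝ) ≠ 0 := Nat.cast_ne_zero.2 (by omega)
          simp only [riemannSum_div_natCast, mul_sum]
          refine sum_congr rfl fun m _ => ?_
          rw [show (m : ℝ) * (d / n) = d * m / n by ring]
          field_simp
  · intro d hd
    rw [Finset.mem_Icc, not_and_or, not_le, not_le, Nat.lt_one_iff] at hd
    rcases hd with rfl | hnd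
    · simp
    · simp [riemannSum_div_natCast, Nat.div_eq_of_lt hnd]

theorem tendsto_tsum_moebius_div_sq_mul_riemannSum {g : ℝ → ℝ} (hg : ContinuousOn g (Icc 0 1)) :
    Tendsto (fun n : ℕ => ∑' d : ℕ, μ d / d ^ 2 * riemannSum g (d / n))
      atTop (𝓝 (6 / π ^ 2 * ∫ x in (0 : ℝ)..1, g x)) := by
  obtain ⟨C, hC⟩ := isCompact_Icc.exists_bound_of_continuousOn hg
  rw [← hasSum_moebius_div_sq.tsum_eq, ← tsum_mul_right]
  refine tendsto_tsum_of_dominated_convergence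
    ((summable_one_div_nat_pow.2 one_lt_two).mul_left C) (fun d => ?_)
    (Eventually.of_forall fun n d => ?_)
  · rcases eq_or_ne d 0 with rfl | hd
    · simp
    · exact (tendsto_riemannSum_div_atTop hg (Nat.cast_pos.2 hd.bot_lt)).const_mul _
  · calc ‖μ d / d ^ 2 * riemannSum g (d / n)‖
        = |(μ d : ℝ)| * (1 / d ^ 2) * |riemannSum g (d / n)| := by
          rw [Real.norm_eq_abs, abs_mul, abs_div, abs_of_nonneg (by positivity : (0 : ℝ) ≤ d ^ 2)]
          ring
      _ ≤ 1 * (1 / d ^ 2) * C := by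
          gcongr
          · exact_mod_cast abs_moebius_le_one
          · exact abs_riemannSum_le hC (by positivity)
      _ = C * (1 / d ^ 2) := by ring

theorem stmt_5 (f : ℝ → ℝ) (hf : ContinuousOn f (Set.Icc 0 1)) :
    Filter.Tendsto
      (fun n : ℕ => (1 / (n : ℝ) ^ 2) * ∑ k ∈ Finset.Icc 1 n, f ((k : ℝ) / n) * Nat.totient k)
      Filter.atTop (nhds ((6 / Real.pi ^ 2) * ∫ x in (0:ℝ)..1, x * f x)) := by
  have hg : ContinuousOn (fun x => x * f x) (Icc 0 1) := continuousOn_id.mul hf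
  exact (tendsto_tsum_moebius_div_sq_mul_riemannSum hg).congr fun n =>
    (one_div_sq_mul_sum_mul_totient f n).symm
end
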